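/- Laplace thresholding for key selection on a single key: let c(D) denote the number of distinct users contributing at least one record to a fixed key k, where c changes by at most 1 between user-level neighbors. Let τ ≥ 1 and ε > 0, and define the mechanism that reports 'retain' if c(D) + Z > τ, where Z ~ Laplace(1/ε), and 'drop' otherwise, with the additional rule that if c(D) = 0 the mechanism always reports 'drop'. Then this mechanism is (ε, δ)-differentially private where δ = (1/2)·exp(−ε(τ − 1)). -/

import Mathlib

/-!
Away from `c = 0` the mechanism is a post-processing of the Laplace mechanism: shifting the
count by `s` moves the Laplace density by a factor at most `exp (ε |s|)`, which gives pure
`ε`-DP. The forced `drop` at `c = 0` breaks this only against a neighbour with `c = 1`, where the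
two output laws differ by the probability `P(1 + Z > τ) = exp (-ε (τ - 1)) / 2` of retaining,
and that is `δ`.
-/

open MeasureTheory

/-- The Laplace distribution with scale `b`, given by density
`(1/(2b)) * exp (-|x|/b)` with respect to Lebesgue measure. -/
noncomputable def laplace (b : ℝ) : Measure ℝ :=
  volume.withDensity (fun x => ENNReal.ofReal ((1 / (2 * b)) * Real.exp (-|x| / b)))

/-- The thresholding mechanism: report `true` (retain) iff `c d + Z > τ` for Laplace
noise `Z` of scale `1/ε`, except that when `c d = 0` it always reports `false` (drop). -/
noncomputable def thresholdMechanism {D : Type*} (c : D → ℕ) (ε τ : ℝ) (d : D) :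
    Measure Bool :=
  if c d = 0 then Measure.dirac false
  else (laplace (1 / ε)).map (fun z => decide (τ < (c d : ℝ) + z))

open Set Real
open scoped ENNReal

section Laplace

variable {b : ℝ}

lemma laplace_apply_Ioi (hb : 0 < b) {t : ℝ} (ht : 0 ≤ t) :
    laplace b (Ioi t) = ENNReal.ofReal (exp (-t / b) / 2) := by
  have hdens : EqOn (fun x => (1 / (2 * b)) * exp (-|x| / b))
      (fun x => (1 / (2 * b)) * exp (-b⁻¹ * x)) (Ioi t) := by
    intro x hx
    simp only [abs_of_pos (ht.trans_lt hx)]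
    ring_nf
  have hint : IntegrableOn (fun x => (1 / (2 * b)) * exp (-b⁻¹ * x)) (Ioi t) :=
    (integrableOn_exp_mul_Ioi (by simpa using hb) t).const_mul _
  rw [laplace, withDensity_apply _ measurableSet_Ioi, setLIntegral_congr_fun measurableSet_Ioi
    (fun x hx => congrArg ENNReal.ofReal (hdens hx)),
    ← ofReal_integral_eq_lintegral_ofReal hint (ae_of_all _ fun x => by positivity),
    integral_const_mul, integral_exp_mul_Ioi (by simpa using hb)]
  congr 1
  field_simp

lemma laplace_apply_Iic_zero (hb : 0 < b) : laplace b (Iic 0) = ENNReal.ofReal (1 / 2) := by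
  have hdens : EqOn (fun x => (1 / (2 * b)) * exp (-|x| / b))
      (fun x => (1 / (2 * b)) * exp (b⁻¹ * x)) (Iic 0) := by
    intro x hx
    simp only [abs_of_nonpos (mem_Iic.mp hx)]
    ring_nf
  have hint : IntegrableOn (fun x => (1 / (2 * b)) * exp (b⁻¹ * x)) (Iic 0) :=
    (integrableOn_exp_mul_Iic (by simpa using hb) 0).const_mul _
  rw [laplace, withDensity_apply _ measurableSet_Iic, setLIntegral_congr_fun measurableSet_Iic
    (fun x hx => congrArg ENNReal.ofReal (hdens hx)),
    ← ofReal_integral_eq_lintegral_ofReal hint (ae_of_all _ fun x => by positivity),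
    integral_const_mul, integral_exp_mul_Iic (by simpa using hb), mul_zero, exp_zero]
  congr 1
  field_simp

lemma isProbabilityMeasure_laplace (hb : 0 < b) : IsProbabilityMeasure (laplace b) := by
  constructor
  rw [← Iic_union_Ioi (a := (0 : ℝ)), measure_union (Iic_disjoint_Ioi le_rfl) measurableSet_Ioi,
    laplace_apply_Iic_zero hb, laplace_apply_Ioi hb le_rfl,
    ← ENNReal.ofReal_add (by norm_num) (by positivity)]
  norm_num

lemma exp_neg_abs_sub_div_le (hb : 0 < b) (x s : ℝ) :
    exp (-|x - s| / b) ≤ exp (|s| / b) * exp (-|x| / b) := by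
  rw [← exp_add, exp_le_exp, ← add_div, div_le_div_iff_of_pos_right hb]
  linarith [abs_sub_abs_le_abs_sub x s]

lemma laplace_preimage_add_right_le (hb : 0 < b) (s : ℝ) (A : Set ℝ) :
    laplace b ((· + s) ⁻¹' A) ≤ ENNReal.ofReal (exp (|s| / b)) * laplace b A := by
  set f := fun x : ℝ => ENNReal.ofReal ((1 / (2 * b)) * exp (-|x| / b))
  have hshift : ∀ y, f (y - s) ≤ ENNReal.ofReal (exp (|s| / b)) * f y := by
    intro y
    rw [← ENNReal.ofReal_mul (exp_pos _).le, mul_left_comm]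
    exact ENNReal.ofReal_le_ofReal
      (mul_le_mul_of_nonneg_left (exp_neg_abs_sub_div_le hb y s) (by positivity))
  calc laplace b ((· + s) ⁻¹' A) = ∫⁻ x in (· + s) ⁻¹' A, f (x + s - s) := by
        simp only [laplace, withDensity_apply', add_sub_cancel_right, f]
    _ = ∫⁻ y in A, f (y - s) :=
        (measurePreserving_add_right volume s).setLIntegral_comp_preimage_emb
          (measurableEmbedding_addRight s) (fun y => f (y - s)) A
    _ ≤ ∫⁻ y in A, ENNReal.ofReal (exp (|s| / b)) * f y := lintegral_mono hshift
    _ = ENNReal.ofReal (exp (|s| / b)) * laplace b A := by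
        rw [lintegral_const_mul' _ _ ENNReal.ofReal_ne_top, laplace, withDensity_apply']

end Laplace

lemma Bool.measure_le_mul_add_of_singleton {μ ν : Measure Bool} [IsProbabilityMeasure μ]
    [IsProbabilityMeasure ν] {C δ : ℝ≥0∞} (hC : 1 ≤ C) (htrue : μ {true} ≤ C * ν {true} + δ)
    (hfalse : μ {false} ≤ C * ν {false} + δ) (S : Set Bool) : μ S ≤ C * ν S + δ := by
  have hpair : ({true, false} : Set Bool) = univ := by ext b; cases b <;> simp
  obtain rfl | rfl | rfl | rfl := subset_pair_iff_eq.mp (hpair ▸ subset_univ S)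
  · simp
  · exact htrue
  · exact hfalse
  · rw [hpair, measure_univ, measure_univ, mul_one]
    exact le_add_right hC

noncomputable def noisyThreshold (b τ c : ℝ) : Measure Bool :=
  (laplace b).map (fun z => decide (τ < c + z))

section NoisyThreshold

variable {b : ℝ} (τ : ℝ)

lemma preimage_decide_lt_add_true (c : ℝ) :
    (fun z : ℝ => decide (τ < c + z)) ⁻¹' {true} = Ioi (τ - c) := by
  ext z
  simp [sub_lt_iff_lt_add']

lemma measurable_decide_lt_add (c : ℝ) : Measurable (fun z : ℝ => decide (τ < c + z)) :=
  measurable_to_bool <| preimage_decide_lt_add_true τ c ▸ measurableSet_Ioi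

lemma noisyThreshold_apply (c : ℝ) (S : Set Bool) :
    noisyThreshold b τ c S = laplace b ((fun z => decide (τ < c + z)) ⁻¹' S) :=
  Measure.map_apply (measurable_decide_lt_add τ c) (.of_discrete)

lemma noisyThreshold_true (c : ℝ) : noisyThreshold b τ c {true} = laplace b (Ioi (τ - c)) := by
  rw [noisyThreshold_apply, preimage_decide_lt_add_true]

lemma noisyThreshold_false (c : ℝ) : noisyThreshold b τ c {false} = laplace b (Iic (τ - c)) := by
  rw [noisyThreshold_apply]
  congr 1
  ext z
  simp [le_sub_iff_add_le']

lemma isProbabilityMeasure_noisyThreshold (hb : 0 < b) (c : ℝ) :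
    IsProbabilityMeasure (noisyThreshold b τ c) :=
  haveI := isProbabilityMeasure_laplace hb
  Measure.isProbabilityMeasure_map (measurable_decide_lt_add τ c).aemeasurable

lemma noisyThreshold_le_exp_mul (hb : 0 < b) (c c' : ℝ) (S : Set Bool) :
    noisyThreshold b τ c S ≤ ENNReal.ofReal (exp (|c - c'| / b)) * noisyThreshold b τ c' S := by
  have hshift : (fun z => decide (τ < c + z))
      = (fun z => decide (τ < c' + z)) ∘ (· + (c - c')) := by
    ext z
    rw [Function.comp_apply, add_left_comm, add_sub_cancel, add_comm]
  rw [noisyThreshold_apply, noisyThreshold_apply, hshift, preimage_comp]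
  exact laplace_preimage_add_right_le hb _ _

lemma dirac_false_le_noisyThreshold (hb : 0 < b) {C : ℝ≥0∞} (hC : 1 ≤ C) (c : ℝ) (S : Set Bool) :
    Measure.dirac false S ≤ C * noisyThreshold b τ c S + laplace b (Ioi (τ - c)) := by
  have := isProbabilityMeasure_laplace hb
  have := isProbabilityMeasure_noisyThreshold τ hb c
  refine Bool.measure_le_mul_add_of_singleton hC (by simp) ?_ S
  calc Measure.dirac false {false}
      = laplace b (Iic (τ - c)) + laplace b (Ioi (τ - c)) := by
        rw [← compl_Ioi, add_comm, measure_add_measure_compl measurableSet_Ioi, measure_univ]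
        simp
    _ ≤ C * noisyThreshold b τ c {false} + laplace b (Ioi (τ - c)) := by
        rw [noisyThreshold_false]
        gcongr
        exact le_mul_of_one_le_left' hC

lemma noisyThreshold_le_dirac_false (hb : 0 < b) {C : ℝ≥0∞} (hC : 1 ≤ C) (c : ℝ) (S : Set Bool) :
    noisyThreshold b τ c S ≤ C * Measure.dirac false S + laplace b (Ioi (τ - c)) := by
  have := isProbabilityMeasure_noisyThreshold τ hb c
  refine Bool.measure_le_mul_add_of_singleton hC ?_ ?_ S
  · simp [noisyThreshold_true]
  · calc noisyThreshold b τ c {false} ≤ 1 := prob_le_one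
      _ ≤ C * Measure.dirac false {false} := by simpa using hC
      _ ≤ _ := le_self_add

end NoisyThreshold

theorem laplace_thresholding_dp
    {D : Type*} (nb : D → D → Prop) (c : D → ℕ)
    (hnb_dist : ∀ d d', nb d d' → c d ≤ c d' + 1 ∧ c d' ≤ c d + 1)
    (hnb_zero : ∀ d d', nb d d' → (c d = 0 → c d' ≤ 1))
    (τ ε : ℝ) (hτ : 1 ≤ τ) (hε : 0 < ε) :
    ∀ d d', nb d d' → ∀ S : Set Bool,
      thresholdMechanism c ε τ d S
        ≤ ENNReal.ofReal (Real.exp ε) * thresholdMechanism c ε τ d' S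
          + ENNReal.ofReal ((1 / 2) * Real.exp (-(ε * (τ - 1)))) := by
  intro d d' hnb S
  have hb : 0 < 1 / ε := one_div_pos.mpr hε
  have hC : 1 ≤ ENNReal.ofReal (exp ε) := ENNReal.one_le_ofReal.mpr (one_le_exp hε.le)
  have hδ : laplace (1 / ε) (Ioi (τ - (1 : ℕ)))
      = ENNReal.ofReal ((1 / 2) * exp (-(ε * (τ - 1)))) := by
    rw [Nat.cast_one, laplace_apply_Ioi hb (sub_nonneg.mpr hτ)]
    congr 1
    field_simp
  obtain ⟨hle, hge⟩ := hnb_dist d d' hnb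
  unfold thresholdMechanism
  split_ifs with hd hd'
  · exact le_add_right (le_mul_of_one_le_left' hC)
  · rw [show c d' = 1 by have := hnb_zero d d' hnb hd; omega]
    exact hδ ▸ dirac_false_le_noisyThreshold τ hb hC _ S
  · rw [show c d = 1 by omega]
    exact hδ ▸ noisyThreshold_le_dirac_false τ hb hC _ S
  · refine le_add_right ((noisyThreshold_le_exp_mul τ hb _ _ S).trans (mul_le_mul_left ?_ _))
    have hle' : (c d : ℝ) ≤ c d' + 1 := by exact_mod_cast hle
    have hge' : (c d' : ℝ) ≤ c d + 1 := by exact_mod_cast hge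
    have hdist : |(c d : ℝ) - c d'| ≤ 1 := abs_sub_le_iff.mpr ⟨by linarith, by linarith⟩
    gcongr
    rwa [div_le_iff₀ hb, mul_one_div_cancel hε.ne']
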